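/- Let A be a unital algebra with a two-sided ideal L such that A/L is isomorphic to the matrix algebra Mₙ(ℂ) for some n ∈ ℕ. Suppose that each maximal left ideal of A containing L is finitely generated as a left ideal of A. Then L is finitely generated as a left ideal of A. -/

import Mathlib

/-!
Choose `eⱼ ∈ A` with `π eⱼ = Eⱼⱼ`. The annihilator `{X | X Eⱼⱼ = 0}` is a maximal left ideal
of `Mₙ(ℂ)`, so `Mⱼ = {a | a eⱼ ∈ L}` is a maximal left ideal of `A` containing `L`.
Since `1 - ∑ eⱼ ∈ L`, every `x ∈ L` splits as `∑ x eⱼ + x (1 - ∑ eⱼ)` with `x ∈ Mⱼ`; hence `L`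
is generated by `1 - ∑ eⱼ` and the products `s eⱼ`, `s` running over finitely many generators
of `Mⱼ`.
-/

noncomputable section

/-- A left ideal of an algebra `A`, encoded as a `ℂ`-submodule closed under
left multiplication by arbitrary elements of `A`. -/
def IsLeftIdeal {A : Type*} [NonUnitalNonAssocSemiring A] [Module ℂ A]
    (I : Submodule ℂ A) : Prop :=
  ∀ a : A, ∀ x ∈ I, a * x ∈ I

/-- The left ideal generated by a set `S` (equivalently `⟨S⟩ = A♯·S`). -/
def leftIdealGen {A : Type*} [NonUnitalNonAssocSemiring A] [Module ℂ A]
    (S : Set A) : Submodule ℂ A :=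
  sInf {I : Submodule ℂ A | IsLeftIdeal I ∧ S ⊆ ↑I}

/-- A left ideal is finitely generated if it is generated by a finite subset of itself. -/
def IsFGLeftIdeal {A : Type*} [NonUnitalNonAssocSemiring A] [Module ℂ A]
    (I : Submodule ℂ A) : Prop :=
  ∃ S : Finset A, ↑S ⊆ (I : Set A) ∧ leftIdealGen (↑S : Set A) = I

/-- A left ideal is countably generated if it is generated by a countable subset of itself. -/
def IsCGLeftIdeal {A : Type*} [NonUnitalNonAssocSemiring A] [Module ℂ A]
    (I : Submodule ℂ A) : Prop :=
  ∃ S : Set A, S.Countable ∧ S ⊆ (I : Set A) ∧ leftIdealGen S = I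

/-- Membership in `𝔐∞(A)`: a maximal element of the family of
non-finitely-generated left ideals. -/
def IsMaxNonFG {A : Type*} [NonUnitalNonAssocSemiring A] [Module ℂ A]
    (M : Submodule ℂ A) : Prop :=
  IsLeftIdeal M ∧ ¬ IsFGLeftIdeal M ∧
    ∀ J : Submodule ℂ A, IsLeftIdeal J → ¬ IsFGLeftIdeal J → M ≤ J → J = M

/-- Membership in `𝔑∞(A)`: a maximal element of the family of
non-countably-generated left ideals. -/
def IsMaxNonCG {A : Type*} [NonUnitalNonAssocSemiring A] [Module ℂ A]
    (M : Submodule ℂ A) : Prop :=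
  IsLeftIdeal M ∧ ¬ IsCGLeftIdeal M ∧
    ∀ J : Submodule ℂ A, IsLeftIdeal J → ¬ IsCGLeftIdeal J → M ≤ J → J = M

/-- `M` is a maximal left ideal. -/
def IsMaxLeftIdeal {A : Type*} [NonUnitalNonAssocSemiring A] [Module ℂ A]
    (M : Submodule ℂ A) : Prop :=
  IsLeftIdeal M ∧ M ≠ ⊤ ∧ ∀ J : Submodule ℂ A, IsLeftIdeal J → M < J → J = ⊤


section LeftIdealGen

variable {A : Type*} [NonUnitalNonAssocSemiring A] [Module ℂ A]

theorem isLeftIdeal_leftIdealGen (S : Set A) : IsLeftIdeal (leftIdealGen S) := by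
  intro a x hx
  simp only [leftIdealGen, Submodule.mem_sInf] at hx ⊢
  exact fun I hI => hI.1 a x (hx I hI)

theorem subset_leftIdealGen (S : Set A) : S ⊆ leftIdealGen S := by
  intro s hs
  simp only [leftIdealGen, SetLike.mem_coe, Submodule.mem_sInf]
  exact fun I hI => hI.2 hs

theorem leftIdealGen_le {S : Set A} {I : Submodule ℂ A} (hI : IsLeftIdeal I) (hS : S ⊆ I) :
    leftIdealGen S ≤ I :=
  sInf_le ⟨hI, hS⟩

end LeftIdealGen

section RightMultiplication

variable {A : Type*} [Ring A] [Algebra ℂ A]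

theorem mul_mem_leftIdealGen_image_mul {S : Set A} {x : A} (hx : x ∈ leftIdealGen S) (e : A) :
    x * e ∈ leftIdealGen ((· * e) '' S) := by
  have hgen : leftIdealGen S ≤ (leftIdealGen ((· * e) '' S)).comap (LinearMap.mulRight ℂ e) := by
    refine leftIdealGen_le (fun a y hy => ?_) fun s hs => ?_
    · simpa only [Submodule.mem_comap, LinearMap.mulRight_apply, mul_assoc]
        using isLeftIdeal_leftIdealGen _ a _ hy
    · exact subset_leftIdealGen _ ⟨s, hs, rfl⟩
  exact hgen hx

theorem isLeftIdeal_comap_mulRight {L : Submodule ℂ A} (hL : IsLeftIdeal L) (e : A) :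
    IsLeftIdeal (L.comap (LinearMap.mulRight ℂ e)) := by
  intro a x hx
  simpa only [Submodule.mem_comap, LinearMap.mulRight_apply, mul_assoc] using hL a _ hx

theorem isMaxLeftIdeal_comap_mulRight {L : Submodule ℂ A} (hL : IsLeftIdeal L) {e : A}
    (he : e ∉ L) (hinv : ∀ x, x * e ∉ L → ∃ u, u * x * e - e ∈ L) :
    IsMaxLeftIdeal (L.comap (LinearMap.mulRight ℂ e)) := by
  refine ⟨isLeftIdeal_comap_mulRight hL e, fun htop => he ?_, fun J hJ hMJ => ?_⟩
  · simpa using (htop ▸ Submodule.mem_top : (1 : A) ∈ L.comap (LinearMap.mulRight ℂ e))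
  obtain ⟨x, hxJ, hxM⟩ := SetLike.exists_of_lt hMJ
  obtain ⟨u, hu⟩ := hinv x hxM
  refine eq_top_iff.mpr fun a _ => ?_
  have hcompl : a - a * (u * x) ∈ L.comap (LinearMap.mulRight ℂ e) := by
    have : (a - a * (u * x)) * e = -(a * (u * x * e - e)) := by noncomm_ring
    simpa only [Submodule.mem_comap, LinearMap.mulRight_apply, this] using
      L.neg_mem (hL a _ hu)
  simpa using J.add_mem (hMJ.le hcompl) (hJ a _ (hJ u x hxJ))

theorem isFGLeftIdeal_of_isFGLeftIdeal_comap_mulRight {ι : Type*} [Fintype ι]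
    {L : Submodule ℂ A} (hL : IsLeftIdeal L) (hLr : ∀ x ∈ L, ∀ a : A, x * a ∈ L) (e : ι → A)
    (hsum : 1 - ∑ i, e i ∈ L) (hfg : ∀ i, IsFGLeftIdeal (L.comap (LinearMap.mulRight ℂ (e i)))) :
    IsFGLeftIdeal L := by
  classical
  choose S hSsub hSgen using hfg
  let G : Finset A := insert (1 - ∑ i, e i) (Finset.univ.biUnion fun i => (S i).image (· * e i))
  have hGsub : (G : Set A) ⊆ L := by
    intro g hg
    simp only [G, Finset.coe_insert, Set.mem_insert_iff, Finset.mem_coe, Finset.mem_biUnion,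
      Finset.mem_image, Finset.mem_univ, true_and] at hg
    rcases hg with rfl | ⟨i, s, hs, rfl⟩
    · exact hsum
    · exact hSsub i hs
  refine ⟨G, hGsub, le_antisymm (leftIdealGen_le hL hGsub) fun x hx => ?_⟩
  have hterm : ∀ i, x * e i ∈ leftIdealGen (G : Set A) := by
    intro i
    have hx' : x ∈ leftIdealGen (S i : Set A) := (hSgen i).symm ▸ hLr x hx (e i)
    refine leftIdealGen_le (isLeftIdeal_leftIdealGen _) ?_ (mul_mem_leftIdealGen_image_mul hx' _)
    rintro _ ⟨s, hs, rfl⟩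
    exact subset_leftIdealGen _ <| Finset.mem_insert_of_mem <|
      Finset.mem_biUnion.mpr ⟨i, Finset.mem_univ _, Finset.mem_image_of_mem _ hs⟩
  have hrest : x * (1 - ∑ i, e i) ∈ leftIdealGen (G : Set A) :=
    isLeftIdeal_leftIdealGen _ x _ (subset_leftIdealGen _ (by simp [G]))
  have hx : x = ∑ i, x * e i + x * (1 - ∑ i, e i) := by
    rw [← Finset.mul_sum, ← mul_add, add_sub_cancel, mul_one]
  rw [hx]
  exact add_mem (Submodule.sum_mem _ fun i _ => hterm i) hrest

end RightMultiplication

theorem Matrix.exists_mul_mul_single_eq_single {K n : Type*} [Field K] [Fintype n]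
    [DecidableEq n] {X : Matrix n n K} {j : n} (hX : X * single j j 1 ≠ 0) :
    ∃ U, U * X * single j j 1 = single j j 1 := by
  obtain ⟨k, hk⟩ : ∃ k, X k j ≠ 0 := by
    contrapose! hX
    ext p q
    by_cases hq : q = j <;> simp [hq, hX]
  exact ⟨(X k j)⁻¹ • single j k 1, by simp [hk]⟩

theorem isMaxLeftIdeal_comap_mulRight_ker {A : Type*} [Ring A] [Algebra ℂ A] {n : Type*}
    [Fintype n] [DecidableEq n] {π : A →ₐ[ℂ] Matrix n n ℂ} (hsurj : Function.Surjective π)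
    {j : n} {e : A} (he : π e = Matrix.single j j 1) :
    IsMaxLeftIdeal ((LinearMap.ker π.toLinearMap).comap (LinearMap.mulRight ℂ e)) := by
  have hleft : IsLeftIdeal (LinearMap.ker π.toLinearMap) := fun a x hx => by simp_all
  refine isMaxLeftIdeal_comap_mulRight hleft ?_ fun x hx => ?_
  · intro h
    have h' : Matrix.single j j (1 : ℂ) = 0 := he ▸ LinearMap.mem_ker.mp h
    simpa using congrFun (congrFun h' j) j
  · obtain ⟨U, hU⟩ := Matrix.exists_mul_mul_single_eq_single (X := π x) (j := j)
      (by simpa [he] using hx)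
    obtain ⟨u, rfl⟩ := hsurj U
    exact ⟨u, by simp [he, hU]⟩

theorem fg_of_matrix_quotient_general {A : Type*} [Ring A] [Algebra ℂ A] (n : ℕ)
    (L : Submodule ℂ A) (hL : IsLeftIdeal L) (hLr : ∀ x ∈ L, ∀ a : A, x * a ∈ L)
    (π : A →ₐ[ℂ] Matrix (Fin n) (Fin n) ℂ) (hsurj : Function.Surjective π)
    (hker : ∀ a : A, π a = 0 ↔ a ∈ L)
    (hmax : ∀ M : Submodule ℂ A, IsMaxLeftIdeal M → L ≤ M → IsFGLeftIdeal M) :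
    IsFGLeftIdeal L := by
  have hLker : L = LinearMap.ker π.toLinearMap := by
    ext a
    simp [hker]
  choose e he using fun j : Fin n => hsurj (Matrix.single j j 1)
  have hsum : 1 - ∑ j, e j ∈ L := by
    rw [← hker, map_sub, map_one, map_sum]
    simp [he, Matrix.sum_single_one]
  refine isFGLeftIdeal_of_isFGLeftIdeal_comap_mulRight hL hLr e hsum fun j => hmax _ ?_ ?_
  · rw [hLker]
    exact isMaxLeftIdeal_comap_mulRight_ker hsurj (he j)
  · exact fun x hx => hLr x hx (e j)

/-- Lemma 1.7. Let `A` be a unital algebra with a two-sided ideal `L`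
such that `A/L ≅ Mₙ(ℂ)` (encoded by a surjective algebra homomorphism `π` onto `Mₙ(ℂ)`
with kernel `L`). If every maximal left ideal of `A` containing `L` is finitely
generated, then `L` is finitely generated as a left ideal of `A`. -/
theorem fg_of_matrix_quotient {A : Type*} [Ring A] [Algebra ℂ A] (n : ℕ) (hn : 0 < n)
    (L : Submodule ℂ A) (hL : IsLeftIdeal L) (hLr : ∀ x ∈ L, ∀ a : A, x * a ∈ L)
    (π : A →ₐ[ℂ] Matrix (Fin n) (Fin n) ℂ) (hsurj : Function.Surjective π)
    (hker : ∀ a : A, π a = 0 ↔ a ∈ L)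
    (hmax : ∀ M : Submodule ℂ A, IsMaxLeftIdeal M → L ≤ M → IsFGLeftIdeal M) :
    IsFGLeftIdeal L :=
  fg_of_matrix_quotient_general n L hL hLr π hsurj hker hmax
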